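/- Let G be a finite simple graph with m := |E(G)| ≥ 1 edges and maximum degree Δ. Then tes(G) ≥ max{⌈(m+2)/3⌉, ⌈(Δ+1)/2⌉}. -/

import Mathlib

open SimpleGraph

/-- `IsEdgeIrregularTotalWeighting G s wv we` : the combined weighting given by `wv` on
vertices and `we` on edges is an edge irregular total `s`-weighting of `G`. -/
def IsEdgeIrregularTotalWeighting {V : Type*} (G : SimpleGraph V) (s : ℕ)
    (wv : V → ℕ) (we : Sym2 V → ℕ) : Prop :=
  (∀ v, 1 ≤ wv v ∧ wv v ≤ s) ∧
  (∀ e ∈ G.edgeSet, 1 ≤ we e ∧ we e ≤ s) ∧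
  ∀ u v u' v', G.Adj u v → G.Adj u' v' → s(u, v) ≠ s(u', v') →
    we s(u, v) + wv u + wv v ≠ we s(u', v') + wv u' + wv v'

/-- The total edge irregularity strength of `G`. -/
noncomputable def tes {V : Type*} (G : SimpleGraph V) : ℕ :=
  sInf {s : ℕ | ∃ (wv : V → ℕ) (we : Sym2 V → ℕ), IsEdgeIrregularTotalWeighting G s wv we}

/-! Under an edge irregular total `s`-weighting the `m` edge weights
`ŵ(uv) + ŵ(u) + ŵ(v)` are distinct numbers in `[3, 3s]`, so `m ≤ 3s - 2`; and the `Δ` edges at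
a vertex `v` of maximum degree have distinct weights `ŵ(vu) + ŵ(u) + ŵ(v)`, so the `Δ` numbers
`ŵ(vu) + ŵ(u)` are distinct in `[2, 2s]`, whence `Δ ≤ 2s - 1`. -/

namespace IsEdgeIrregularTotalWeighting

variable {V : Type*} {G : SimpleGraph V} {s : ℕ} {wv : V → ℕ} {we : Sym2 V → ℕ}

def edgeWeight (wv : V → ℕ) (we : Sym2 V → ℕ) (e : Sym2 V) : ℕ :=
  we e + Sym2.lift ⟨fun u v => wv u + wv v, fun u v => Nat.add_comm (wv u) (wv v)⟩ e

@[simp]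
theorem edgeWeight_mk (u v : V) : edgeWeight wv we s(u, v) = we s(u, v) + wv u + wv v := by
  simp only [edgeWeight, Sym2.lift_mk, Nat.add_assoc]

theorem one_le (h : IsEdgeIrregularTotalWeighting G s wv we) (v : V) : 1 ≤ s :=
  (h.1 v).1.trans (h.1 v).2

theorem injOn_edgeWeight (h : IsEdgeIrregularTotalWeighting G s wv we) :
    Set.InjOn (edgeWeight wv we) G.edgeSet := by
  intro e he e' he' heq
  induction e using Sym2.ind with | _ u v => ?_
  induction e' using Sym2.ind with | _ u' v' => ?_
  by_contra hne
  simp only [edgeWeight_mk] at heq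
  exact h.2.2 u v u' v' he he' hne heq

theorem mapsTo_edgeWeight (h : IsEdgeIrregularTotalWeighting G s wv we) :
    Set.MapsTo (edgeWeight wv we) G.edgeSet (Set.Icc 3 (3 * s)) := by
  intro e he
  induction e using Sym2.ind with | _ u v => ?_
  have hu := h.1 u
  have hv := h.1 v
  have he := h.2.1 _ he
  simp only [edgeWeight_mk, Set.mem_Icc]
  omega

theorem ncard_edgeSet_add_two_le [Nonempty V] (h : IsEdgeIrregularTotalWeighting G s wv we) :
    G.edgeSet.ncard + 2 ≤ 3 * s := by
  have hcard := Set.ncard_le_ncard_of_injOn _ h.mapsTo_edgeWeight h.injOn_edgeWeight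
    (Set.finite_Icc _ _)
  rw [← Finset.coe_Icc, Set.ncard_coe_finset, Nat.card_Icc] at hcard
  have := h.one_le (Classical.arbitrary V)
  omega

theorem degree_add_one_le (h : IsEdgeIrregularTotalWeighting G s wv we) (v : V)
    [Fintype (G.neighborSet v)] : G.degree v + 1 ≤ 2 * s := by
  -- All edges at `v` share the summand `ŵ(v)`, so `ŵ(vu) + ŵ(u)` is injective on neighbours.
  have hmaps : Set.MapsTo (fun u => we s(v, u) + wv u) (G.neighborFinset v)
      (Finset.Icc 2 (2 * s)) := by
    intro u hu
    rw [Finset.mem_coe, mem_neighborFinset] at hu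
    have := h.1 u
    have := h.2.1 s(v, u) hu
    simp only [Finset.coe_Icc, Set.mem_Icc]
    omega
  have hinj : Set.InjOn (fun u => we s(v, u) + wv u) (G.neighborFinset v) := by
    intro u hu u' hu' heq
    rw [Finset.mem_coe, mem_neighborFinset] at hu hu'
    by_contra hne
    refine h.2.2 v u v u' hu hu' (fun h => hne (Sym2.congr_right.mp h)) ?_
    simp only at heq
    omega
  have hcard := Finset.card_le_card_of_injOn _ hmaps hinj
  rw [Nat.card_Icc, card_neighborFinset_eq_degree] at hcard
  have := h.one_le v
  omega

theorem maxDegree_add_one_le [Fintype V] [DecidableRel G.Adj] [Nonempty V]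
    (h : IsEdgeIrregularTotalWeighting G s wv we) : G.maxDegree + 1 ≤ 2 * s := by
  obtain ⟨v, hv⟩ := G.exists_maximal_degree_vertex
  exact hv ▸ h.degree_add_one_le v

end IsEdgeIrregularTotalWeighting

theorem exists_isEdgeIrregularTotalWeighting {V : Type*} (G : SimpleGraph V)
    [Finite G.edgeSet] : ∃ s wv we, IsEdgeIrregularTotalWeighting G s wv we := by
  classical
  obtain ⟨n, ⟨f⟩⟩ := Finite.exists_equiv_fin G.edgeSet
  refine ⟨n + 1, fun _ => 1, fun e => if he : e ∈ G.edgeSet then f ⟨e, he⟩ + 1 else 1,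
    fun _ => ⟨le_rfl, Nat.le_add_left 1 n⟩, fun e he => ?_, fun u v u' v' huv hu'v' hne heq => ?_⟩
  · have := (f ⟨e, he⟩).isLt
    simp only [dif_pos he]
    omega
  · simp only [dif_pos (show s(u, v) ∈ G.edgeSet from huv),
      dif_pos (show s(u', v') ∈ G.edgeSet from hu'v'), Nat.add_right_cancel_iff] at heq
    exact hne (congrArg Subtype.val (f.injective (Fin.ext heq)))

theorem isEdgeIrregularTotalWeighting_tes {V : Type*} (G : SimpleGraph V) [Finite G.edgeSet] :
    ∃ wv we, IsEdgeIrregularTotalWeighting G (tes G) wv we :=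
  Nat.sInf_mem (exists_isEdgeIrregularTotalWeighting G)

theorem tes_ge_max_general {V : Type*} [Fintype V]
    (G : SimpleGraph V) [DecidableRel G.Adj]
    (m : ℕ) (hm : m = G.edgeSet.ncard) (hpos : 1 ≤ m) :
    max ⌈((m : ℚ) + 2) / 3⌉ ⌈((G.maxDegree : ℚ) + 1) / 2⌉ ≤ (tes G : ℤ) := by
  obtain ⟨wv, we, h⟩ := isEdgeIrregularTotalWeighting_tes G
  have hE : G.edgeSet.Nonempty := Set.nonempty_of_ncard_ne_zero (by omega)
  have : Nonempty V := ⟨hE.some.out.1⟩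
  have hm3 : (m : ℚ) + 2 ≤ 3 * tes G := by exact_mod_cast hm ▸ h.ncard_edgeSet_add_two_le
  have hΔ2 : (G.maxDegree : ℚ) + 1 ≤ 2 * tes G := by exact_mod_cast h.maxDegree_add_one_le
  refine max_le (Int.ceil_le.mpr ?_) (Int.ceil_le.mpr ?_) <;> push_cast
  · rw [div_le_iff₀ (by norm_num)]; linarith
  · rw [div_le_iff₀ (by norm_num)]; linarith

/-- For every finite simple graph `G` with `m ≥ 1` edges and maximum
degree `Δ`, we have `tes(G) ≥ max{⌈(m+2)/3⌉, ⌈(Δ+1)/2⌉}`. -/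
theorem tes_ge_max {V : Type*} [Fintype V] [DecidableEq V]
    (G : SimpleGraph V) [DecidableRel G.Adj]
    (m : ℕ) (hm : m = G.edgeSet.ncard) (hpos : 1 ≤ m) :
    max ⌈((m : ℚ) + 2) / 3⌉ ⌈((G.maxDegree : ℚ) + 1) / 2⌉ ≤ (tes G : ℤ) :=
  tes_ge_max_general G m hm hpos
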